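/- Let v ∈ ℝⁿ \ {0} with δ = |v·e₁|/|v| < 1, and set λ₁ = (1−δ)/(16√2). Then for every t ∈ ℝ with |t| ≥ 1 and every x ∈ ℝⁿ with |x| ≤ 4λ₁|v|⟨t⟩, one has |x + v t + e₁ t²/2| ≥ max{ c₁·|v|·|t| , c₂·t² }, where c₁ = √(2(1−δ²))/2 and c₂ = √(2(1−δ²))/(3+δ). -/

import Mathlib

open scoped InnerProductSpace
open Real

/-! Write `u = t v`, `w = (t²/2) e₁`, `A = |u| = |v||t|` and `B = |w| = t²/2`. Then `⟨u, w⟩ ≥ -δAB`, so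
`|u + w|² ≥ A² - 2δAB + B²`, while for `|t| ≥ 1` the constraint on `x` gives `|x| ≤ (1-δ)/4 · A`.
It therefore suffices to show `|u + w| ≥ aB + bA` for `(a, b) = (0, c₁ + (1-δ)/4)` and for
`(a, b) = (2c₂, (1-δ)/4)`. This holds as soon as the quadratic form `A² - 2δAB + B² - (aB + bA)²` is
positive semidefinite, i.e. as soon as its determinant is nonnegative, which is a polynomial
inequality in `δ` and `√(2(1-δ²))`. -/

-- `X² - 2δXY + Y² - (aY + bX)²` is the form with matrix `[[1-b², -(δ+ab)], [-(δ+ab), 1-a²]]`.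
lemma mul_add_mul_sq_le_of_det_nonneg {δ a b : ℝ} (hb : b ^ 2 < 1)
    (hdet : (δ + a * b) ^ 2 ≤ (1 - b ^ 2) * (1 - a ^ 2)) (X Y : ℝ) :
    (a * Y + b * X) ^ 2 ≤ X ^ 2 - 2 * δ * X * Y + Y ^ 2 := by
  have key : (1 - b ^ 2) * (X ^ 2 - 2 * δ * X * Y + Y ^ 2 - (a * Y + b * X) ^ 2)
      = ((1 - b ^ 2) * X - (δ + a * b) * Y) ^ 2
        + ((1 - b ^ 2) * (1 - a ^ 2) - (δ + a * b) ^ 2) * Y ^ 2 := by ring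
  have : 0 ≤ (1 - b ^ 2) * (X ^ 2 - 2 * δ * X * Y + Y ^ 2 - (a * Y + b * X) ^ 2) := by
    rw [key]; exact add_nonneg (sq_nonneg _) (mul_nonneg (sub_nonneg.2 hdet) (sq_nonneg _))
  linarith [(mul_nonneg_iff_of_pos_left (sub_pos.2 hb)).mp this]

lemma mul_add_mul_le_norm_add {E : Type*} [NormedAddCommGroup E] [InnerProductSpace ℝ E]
    {u w : E} {δ a b : ℝ} (hδ : -⟪u, w⟫_ℝ ≤ δ * (‖u‖ * ‖w‖)) (hb : b ^ 2 < 1)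
    (hdet : (δ + a * b) ^ 2 ≤ (1 - b ^ 2) * (1 - a ^ 2)) :
    a * ‖w‖ + b * ‖u‖ ≤ ‖u + w‖ := by
  have hsq : (a * ‖w‖ + b * ‖u‖) ^ 2 ≤ ‖u + w‖ ^ 2 := by
    rw [norm_add_sq_real]
    linarith [mul_add_mul_sq_le_of_det_nonneg hb hdet ‖u‖ ‖w‖]
  exact (abs_le_of_sq_le_sq' hsq (norm_nonneg _)).2

lemma sqrt_one_add_sq_le {t : ℝ} (ht : 1 ≤ |t|) : √(1 + t ^ 2) ≤ √2 * |t| := by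
  rw [← sqrt_sq (abs_nonneg t), ← sqrt_mul zero_le_two, sq_abs]
  exact sqrt_le_sqrt (by nlinarith [sq_abs t])

section Constants

variable {δ p : ℝ}

lemma sq_add_sq_half_add_quarter_lt_one (hδ0 : 0 ≤ δ) (hδ1 : δ < 1) (hp : 0 ≤ p)
    (hp2 : p ^ 2 = 2 * (1 - δ ^ 2)) :
    δ ^ 2 + (p / 2 + (1 - δ) / 4) ^ 2 < 1 := by
  -- `1 - δ ≤ 3p/4` because `(1-δ)² ≤ 1-δ² = p²/2`, so `p/2 + (1-δ)/4 ≤ 11p/16` and `(11/16)² < 1/2`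
  have h1 : 1 - δ ≤ 3 * p / 4 := by nlinarith
  nlinarith

lemma sq_add_mul_quarter_le_mul_one_sub_sq (hδ0 : 0 ≤ δ) (hδ1 : δ ≤ 1) (hp : 0 ≤ p)
    (hp2 : p ^ 2 = 2 * (1 - δ ^ 2)) :
    (δ + 2 * (p / (3 + δ)) * ((1 - δ) / 4)) ^ 2
      ≤ (1 - ((1 - δ) / 4) ^ 2) * (1 - (2 * (p / (3 + δ))) ^ 2) := by
  have hp32 : p ≤ 3 / 2 := by nlinarith
  have h3δ : 3 + δ ≠ 0 := by linarith
  have hcleared : (4 * (3 + δ) * δ + 2 * p * (1 - δ)) ^ 2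
      ≤ (16 - (1 - δ) ^ 2) * ((3 + δ) ^ 2 - 4 * p ^ 2) := by
    have e : (16 - (1 - δ) ^ 2) * ((3 + δ) ^ 2 - 4 * p ^ 2) - (4 * (3 + δ) * δ + 2 * p * (1 - δ)) ^ 2
        = 16 * ((3 / 2 - p) * (δ * (1 - δ) * (3 + δ)))
          + (1 - δ) * (7 + 43 * δ + 93 * δ ^ 2 + 17 * δ ^ 3) - 64 * (p ^ 2 - 2 * (1 - δ ^ 2)) := by
      ring
    have h1 : 0 ≤ (3 / 2 - p) * (δ * (1 - δ) * (3 + δ)) := by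
      have := sub_nonneg.2 hδ1; positivity
    have h2 : 0 ≤ (1 - δ) * (7 + 43 * δ + 93 * δ ^ 2 + 17 * δ ^ 3) := by
      have := sub_nonneg.2 hδ1; positivity
    nlinarith
  rw [← mul_le_mul_iff_of_pos_right (by positivity : (0 : ℝ) < 16 * (3 + δ) ^ 2)]
  calc _ = (4 * (3 + δ) * δ + 2 * p * (1 - δ)) ^ 2 := by field_simp; ring
    _ ≤ _ := hcleared
    _ = _ := by field_simp; ring

end Constants

theorem stmt_1 (n : ℕ) (hn : 2 ≤ n)
    (v : EuclideanSpace ℝ (Fin n)) (hv : v ≠ 0)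
    (e1 : EuclideanSpace ℝ (Fin n))
    (he1 : e1 = EuclideanSpace.single ⟨0, by omega⟩ (1 : ℝ))
    (δ : ℝ) (hδ : δ = |⟪v, e1⟫_ℝ| / ‖v‖) (hδ1 : δ < 1)
    (lam : ℝ) (hlam : lam = (1 - δ) / (16 * Real.sqrt 2))
    (c1 c2 : ℝ) (hc1 : c1 = Real.sqrt (2 * (1 - δ ^ 2)) / 2)
    (hc2 : c2 = Real.sqrt (2 * (1 - δ ^ 2)) / (3 + δ))
    (t : ℝ) (ht : 1 ≤ |t|)
    (x : EuclideanSpace ℝ (Fin n))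
    (hx : ‖x‖ ≤ 4 * lam * ‖v‖ * Real.sqrt (1 + t ^ 2)) :
    max (c1 * ‖v‖ * |t|) (c2 * t ^ 2) ≤ ‖x + t • v + (t ^ 2 / 2) • e1‖ := by
  set p := √(2 * (1 - δ ^ 2))
  have hδ0 : 0 ≤ δ := by rw [hδ]; positivity
  have hp2 : p ^ 2 = 2 * (1 - δ ^ 2) := sq_sqrt (by nlinarith)
  have hnorm_u : ‖t • v‖ = ‖v‖ * |t| := by rw [norm_smul, norm_eq_abs, mul_comm]
  have hnorm_w : ‖(t ^ 2 / 2) • e1‖ = t ^ 2 / 2 := by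
    rw [norm_smul, he1, PiLp.norm_single, norm_one, mul_one, norm_eq_abs, abs_of_nonneg]
    positivity
  have hinner : -⟪t • v, (t ^ 2 / 2) • e1⟫_ℝ ≤ δ * (‖t • v‖ * ‖(t ^ 2 / 2) • e1‖) := by
    have hve : |⟪v, e1⟫_ℝ| = δ * ‖v‖ := by rw [hδ, div_mul_cancel₀ _ (norm_ne_zero_iff.2 hv)]
    have hcross : -(t * ⟪v, e1⟫_ℝ) ≤ |t| * (δ * ‖v‖) := by
      rw [← hve, ← abs_mul]; exact neg_le_abs _
    rw [hnorm_u, hnorm_w, real_inner_smul_left, real_inner_smul_right]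
    nlinarith [mul_le_mul_of_nonneg_right hcross (by positivity : (0 : ℝ) ≤ t ^ 2 / 2)]
  have hx' : ‖x‖ ≤ (1 - δ) / 4 * ‖t • v‖ := by
    calc ‖x‖ ≤ 4 * lam * ‖v‖ * (√2 * |t|) := by
          refine hx.trans (mul_le_mul_of_nonneg_left (sqrt_one_add_sq_le ht) ?_)
          rw [hlam]; have := sub_nonneg.2 hδ1.le; positivity
      _ = (1 - δ) / 4 * ‖t • v‖ := by rw [hnorm_u, hlam]; field_simp; ring
  have hsplit : ‖t • v + (t ^ 2 / 2) • e1‖ - ‖x‖ ≤ ‖x + t • v + (t ^ 2 / 2) • e1‖ := by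
    have := norm_sub_le (x + (t • v + (t ^ 2 / 2) • e1)) x
    rw [add_sub_cancel_left, ← add_assoc] at this
    linarith
  have hquarter : ((1 - δ) / 4) ^ 2 < 1 := by nlinarith
  refine max_le ?_ ?_
  · have hlin := sq_add_sq_half_add_quarter_lt_one hδ0 hδ1 (sqrt_nonneg _) hp2
    have := mul_add_mul_le_norm_add (a := 0) (b := p / 2 + (1 - δ) / 4) hinner
      (by nlinarith) (by nlinarith)
    rw [hc1, mul_assoc, ← hnorm_u]
    linarith
  · have := mul_add_mul_le_norm_add hinner hquarter
      (sq_add_mul_quarter_le_mul_one_sub_sq hδ0 hδ1.le (sqrt_nonneg _) hp2)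
    rw [hnorm_w, ← hc2] at this
    linarith
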